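/- Iterated dissipation bounds: if {E_k}_{k≥0} satisfies E_0 has volume m_0 and each E_k minimizes F^h(·,E_{k-1}), then for all k ≥ 1: (a) C_β(E_k) + (1/√h)||E_k| - m_0| ≤ P(E_0), and (b) Σ_{s=1}^k (1/h)∫_{E_sΔE_{s-1}} d_{E_{s-1}} dx ≤ P(E_0). -/

import Mathlib

open MeasureTheory Set Metric
open scoped Classical

theorem add_sum_Icc_le_of_succ_add_le {a D : ℕ → ℝ} (hstep : ∀ k, a (k + 1) + D (k + 1) ≤ a k)
    (k : ℕ) : a k + ∑ s ∈ Finset.Icc 1 k, D s ≤ a 0 := by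
  induction k with
  | zero => simp
  | succ n ih =>
    rw [Finset.sum_Icc_succ_top (Nat.le_add_left 1 n)]
    linarith [hstep n]

theorem le_and_sum_Icc_le_of_succ_add_le {a D : ℕ → ℝ}
    (hstep : ∀ k, a (k + 1) + D (k + 1) ≤ a k) (ha : ∀ k, 0 ≤ a k) (hD : ∀ k, 0 ≤ D k)
    (k : ℕ) : a k ≤ a 0 ∧ ∑ s ∈ Finset.Icc 1 k, D s ≤ a 0 := by
  have htelescope := add_sum_Icc_le_of_succ_add_le hstep k
  have hsum : 0 ≤ ∑ s ∈ Finset.Icc 1 k, D s := Finset.sum_nonneg fun s _ => hD s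
  exact ⟨by linarith, by linarith [ha k]⟩

theorem nonneg_of_mul_le_of_le {κ p c : ℝ} (hκ0 : 0 ≤ κ) (hκ1 : κ < 1) (hlow : κ * p ≤ c)
    (hup : c ≤ p) : 0 ≤ c := by
  have hp : 0 ≤ p := by nlinarith
  nlinarith

theorem stmt3_general (d : ℕ) (h m0 κ : ℝ) (hh : h ∈ Set.Ioo (0:ℝ) 1)
    (hκ : κ ∈ Set.Ioc (0:ℝ) (1/2))
    (P Cβ : Set (EuclideanSpace ℝ (Fin (d+1))) → ℝ)
    (hcoer : ∀ G, κ * P G ≤ Cβ G ∧ Cβ G ≤ P G)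
    (dA : Set (EuclideanSpace ℝ (Fin (d+1))) → EuclideanSpace ℝ (Fin (d+1)) → ℝ)
    (hdA : ∀ G x, dA G x = if x ∈ G then Metric.infDist x Gᶜ else Metric.infDist x G)
    (E : ℕ → Set (EuclideanSpace ℝ (Fin (d+1))))
    (hvol0 : (volume (E 0)).toReal = m0)
    (Fh : Set (EuclideanSpace ℝ (Fin (d+1))) → Set (EuclideanSpace ℝ (Fin (d+1))) → ℝ)
    (hFh : ∀ G F, Fh G F = Cβ G + (1/h) * (∫ x in symmDiff G F, dA F x)
        + (1/Real.sqrt h) * |(volume G).toReal - m0|)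
    (hmin : ∀ k : ℕ, 1 ≤ k → ∀ G, Fh (E k) (E (k-1)) ≤ Fh G (E (k-1))) :
    ∀ k : ℕ, 1 ≤ k →
      (Cβ (E k) + (1/Real.sqrt h) * |(volume (E k)).toReal - m0| ≤ P (E 0)) ∧
      (∑ s ∈ Finset.Icc 1 k, (1/h) * (∫ x in symmDiff (E s) (E (s-1)), dA (E (s-1)) x)
        ≤ P (E 0)) := by
  intro k _
  have hCβ : ∀ G, 0 ≤ Cβ G := fun G =>
    nonneg_of_mul_le_of_le hκ.1.le (by linarith [hκ.2]) (hcoer G).1 (hcoer G).2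
  have hdA_nonneg : ∀ G x, 0 ≤ dA G x := fun G x => by
    rw [hdA]; split_ifs <;> exact infDist_nonneg
  set energy : ℕ → ℝ := fun k => Cβ (E k) + (1/Real.sqrt h) * |(volume (E k)).toReal - m0|
  set dissipation : ℕ → ℝ := fun s =>
    (1/h) * (∫ x in symmDiff (E s) (E (s-1)), dA (E (s-1)) x)
  -- Minimality of `E (k+1)` tested against the competitor `E k`, whose distance term vanishes.
  have hstep : ∀ k, energy (k + 1) + dissipation (k + 1) ≤ energy k := fun k => by
    have := hmin (k + 1) (Nat.le_add_left 1 k) (E k)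
    simp only [hFh, Nat.add_sub_cancel, symmDiff_self, bot_eq_empty, setIntegral_empty,
      mul_zero, add_zero] at this
    simp only [energy, dissipation, Nat.add_sub_cancel]
    linarith
  obtain ⟨henergy, hdissipation⟩ := le_and_sum_Icc_le_of_succ_add_le hstep
    (fun k => add_nonneg (hCβ _) (mul_nonneg (by positivity) (abs_nonneg _)))
    (fun s => mul_nonneg (one_div_nonneg.2 hh.1.le) (integral_nonneg (hdA_nonneg _)))
    k
  have henergy_zero : energy 0 ≤ P (E 0) := by
    simpa only [energy, hvol0, sub_self, abs_zero, mul_zero, add_zero] using (hcoer (E 0)).2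
  exact ⟨henergy.trans henergy_zero, hdissipation.trans henergy_zero⟩

/-- Iterated dissipation bounds: if `E 0` has volume `m_0` and each `E k` (`k ≥ 1`)
minimizes `F^h(·, E (k-1))`, then for all `k ≥ 1`:
(a) `C_β(E_k) + (1/√h)||E_k|-m_0| ≤ P(E_0)`, and
(b) `Σ_{s=1}^k (1/h)∫_{E_sΔE_{s-1}} d_{E_{s-1}} dx ≤ P(E_0)`. -/
theorem stmt3 (d : ℕ) (h m0 κ : ℝ) (hh : h ∈ Set.Ioo (0:ℝ) 1)
    (hκ : κ ∈ Set.Ioc (0:ℝ) (1/2)) (hm0 : 0 < m0)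
    (P Cβ : Set (EuclideanSpace ℝ (Fin (d+1))) → ℝ)
    (hcoer : ∀ G, κ * P G ≤ Cβ G ∧ Cβ G ≤ P G)
    (dA : Set (EuclideanSpace ℝ (Fin (d+1))) → EuclideanSpace ℝ (Fin (d+1)) → ℝ)
    (hdA : ∀ G x, dA G x = if x ∈ G then Metric.infDist x Gᶜ else Metric.infDist x G)
    (E : ℕ → Set (EuclideanSpace ℝ (Fin (d+1))))
    (hvol0 : (volume (E 0)).toReal = m0)
    (Fh : Set (EuclideanSpace ℝ (Fin (d+1))) → Set (EuclideanSpace ℝ (Fin (d+1))) → ℝ)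
    (hFh : ∀ G F, Fh G F = Cβ G + (1/h) * (∫ x in symmDiff G F, dA F x)
        + (1/Real.sqrt h) * |(volume G).toReal - m0|)
    (hmin : ∀ k : ℕ, 1 ≤ k → ∀ G, Fh (E k) (E (k-1)) ≤ Fh G (E (k-1))) :
    ∀ k : ℕ, 1 ≤ k →
      (Cβ (E k) + (1/Real.sqrt h) * |(volume (E k)).toReal - m0| ≤ P (E 0)) ∧
      (∑ s ∈ Finset.Icc 1 k, (1/h) * (∫ x in symmDiff (E s) (E (s-1)), dA (E (s-1)) x)
        ≤ P (E 0)) :=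
  stmt3_general d h m0 κ hh hκ P Cβ hcoer dA hdA E hvol0 Fh hFh hmin
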